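/- arXiv:2604.15198 — 3 statements merged into one kernel-verified Lean document; each statement's English description precedes it below -/
import Mathlib

section
/- Let V = V₀ ⊕ V₁ and W = W₀ ⊕ W₁ be direct sum decompositions of Banach spaces into closed subspaces, and let M be a C¹ map from a neighborhood of 0 ∈ V to W with M(0) = 0, whose derivative L = dM₀ has kernel V₀ and image W₁, and which restricts to an isomorphism L : V₁ → W₁. Suppose the zero set {M = 0} coincides near 0 with {M₁ = 0}, where M = M₀ ⊕ M₁ is the splitting along W = W₀ ⊕ W₁, and suppose M₁(x, 0) ≡ 0 for x ∈ V₀ near 0. Then for every ε > 0 there exists δ > 0 such that |M₀(u)| ≤ ε|M(u)| for all u ∈ B_δ(0). -/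
/-!
Write `u = x + y` with `x ∈ V₀`, `y ∈ V₁`. For small `u` we have `M₁ x = 0`, hence `M x = 0`
because the zero sets of `M` and `M₁` agree, so strict differentiability of `M` at `0` gives
`M u = L y + o(‖y‖)`. Since `L` is bounded below on `V₁`, `y = O(L y)`, hence `L y = O(M u)`.
Finally `π₀` kills `L y ∈ W₁`, so `M₀ u = π₀ (M u - L y) = o(‖y‖) = o(‖M u‖)`.
-/

open Asymptotics Filter Topology

section

variable {𝕜 : Type*} [NontriviallyNormedField 𝕜]

theorem ContinuousLinearMap.exists_norm_le_mul_norm_of_isClosed_image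
    {E F : Type*} [NormedAddCommGroup E] [NormedSpace 𝕜 E] [CompleteSpace E]
    [NormedAddCommGroup F] [NormedSpace 𝕜 F] [CompleteSpace F]
    (L : E →L[𝕜] F) {p : Submodule 𝕜 E} (hp : IsClosed (p : Set E))
    (hinj : ∀ y ∈ p, L y = 0 → y = 0) (himage : IsClosed (L '' p)) :
    ∃ c : ℝ, ∀ y ∈ p, ‖y‖ ≤ c * ‖L y‖ := by
  have : CompleteSpace p := hp.completeSpace_coe
  set f : p →L[𝕜] F := L ∘L p.subtypeL
  have hf : Function.Injective f :=
    (injective_iff_map_eq_zero f).2 fun y hy => Subtype.ext (hinj y y.2 hy)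
  have hrange : Set.range f = L '' p := by
    rw [← Subtype.range_coe (s := (p : Set E)), ← Set.range_comp]
    rfl
  obtain ⟨K, hK⟩ := f.antilipschitz_of_injective_of_isClosed_range hf (hrange ▸ himage)
  exact ⟨K, fun y hy => hK.le_mul_norm (map_zero f) ⟨y, hy⟩⟩

variable {V W F : Type*} [NormedAddCommGroup V] [NormedSpace 𝕜 V]
  [NormedAddCommGroup W] [NormedSpace 𝕜 W] [NormedAddCommGroup F] [NormedSpace 𝕜 F]

theorem HasStrictFDerivAt.isLittleO_clm_comp {M : V → W} {L : V →L[𝕜] W}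
    (hM : HasStrictFDerivAt M L 0) {Q : V →L[𝕜] V} (hMQ : ∀ᶠ u in 𝓝 0, M (Q u) = 0)
    (hQL : (fun u => u - Q u) =O[𝓝 0] fun u => L (u - Q u))
    {P : W →L[𝕜] F} (hPL : P ∘L L = 0) :
    (fun u => P (M u)) =o[𝓝 0] M := by
  have hpair : Tendsto (fun u => (u, Q u)) (𝓝 0) (𝓝 (0, 0)) := by
    simpa using (continuous_id.prodMk Q.continuous).tendsto (0 : V)
  have herr : (fun u => M u - L (u - Q u)) =o[𝓝 0] fun u => L (u - Q u) := by
    refine ((hM.isLittleO.comp_tendsto hpair).congr' ?_ EventuallyEq.rfl).trans_isBigO hQL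
    filter_upwards [hMQ] with u hu
    simp [hu]
  have hLM : (fun u => L (u - Q u)) =O[𝓝 0] M := by
    simpa using herr.right_isBigO_add
  have hPM : (fun u => P (M u)) = fun u => P (M u - L (u - Q u)) := by
    ext u
    rw [map_sub, ← ContinuousLinearMap.comp_apply, hPL, zero_apply, sub_zero]
  rw [hPM]
  exact ((P.isBigO_comp _ _).trans_isLittleO herr).trans_isBigO hLM

end

theorem stmt1_general {V W : Type*} [NormedAddCommGroup V] [NormedSpace ℝ V] [CompleteSpace V]
    [NormedAddCommGroup W] [NormedSpace ℝ W] [CompleteSpace W]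
    (V₀ V₁ : Submodule ℝ V) (W₀ W₁ : Submodule ℝ W)
    (hVcompl : IsCompl V₀ V₁) (hWcompl : IsCompl W₀ W₁)
    (hV₀c : IsClosed (V₀ : Set V)) (hV₁c : IsClosed (V₁ : Set V))
    (hW₀c : IsClosed (W₀ : Set W)) (hW₁c : IsClosed (W₁ : Set W))
    (M : V → W) (hM : ContDiffAt ℝ 1 M 0)
    (L : V →L[ℝ] W) (hL : HasFDerivAt M L 0)
    (hrange : LinearMap.range (L : V →ₗ[ℝ] W) = W₁)
    (hinj : ∀ y ∈ V₁, L y = 0 → y = 0)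
    (hsurj : ∀ w ∈ W₁, ∃ y ∈ V₁, L y = w)
    (M₀ M₁ : V → W)
    (hM₀ : M₀ = fun u => (Submodule.linearProjOfIsCompl W₀ W₁ hWcompl (M u) : W))
    (ρ : ℝ) (hρ : 0 < ρ)
    (hzero : ∀ u : V, ‖u‖ < ρ → (M u = 0 ↔ M₁ u = 0))
    (hM₁van : ∀ x ∈ V₀, ‖x‖ < ρ → M₁ x = 0) :
    ∀ ε > (0:ℝ), ∃ δ > (0:ℝ), ∀ u : V, ‖u‖ < δ → ‖M₀ u‖ ≤ ε * ‖M u‖ := by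
  intro ε hε
  have hV := Submodule.IsCompl.isTopCompl_of_isClosed hVcompl hV₀c hV₁c
  have hW := Submodule.IsCompl.isTopCompl_of_isClosed hWcompl hW₀c hW₁c
  have hLW₁ : ∀ v, L v ∈ W₁ := fun v => hrange ▸ LinearMap.mem_range_self _ v
  have hLV₁ : L '' V₁ = W₁ := by
    refine Set.Subset.antisymm (Set.image_subset_iff.2 fun v _ => hLW₁ v) fun w hw => ?_
    obtain ⟨y, hy, rfl⟩ := hsurj w hw
    exact ⟨y, hy, rfl⟩
  obtain ⟨c, hc⟩ := L.exists_norm_le_mul_norm_of_isClosed_image hV₁c hinj (hLV₁ ▸ hW₁c)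
  have hMQ : ∀ᶠ u in 𝓝 0, M (V₀.projectionL V₁ hV u) = 0 := by
    have hQ : Tendsto (V₀.projectionL V₁ hV) (𝓝 0) (𝓝 0) := by
      simpa using (V₀.projectionL V₁ hV).continuous.tendsto 0
    filter_upwards [hQ.norm (Iio_mem_nhds (by simpa using hρ))] with u (hu : _ < ρ)
    exact (hzero _ hu).2 (hM₁van _ (Submodule.projectionL_apply_mem hV u) hu)
  have hQL : (fun u => u - V₀.projectionL V₁ hV u) =O[𝓝 0]
      fun u => L (u - V₀.projectionL V₁ hV u) := by
    refine .of_bound c (Eventually.of_forall fun u => hc _ ?_)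
    rw [← Submodule.projectionL_eq_self_sub_projectionL hV]
    exact Submodule.projectionL_apply_mem hV.symm u
  have hPL : W₀.projectionL W₁ hW ∘L L = 0 :=
    ContinuousLinearMap.ext fun v => (Submodule.projectionL_apply_eq_zero_iff hW).2 (hLW₁ v)
  have hsmall := (hM.hasStrictFDerivAt' hL one_ne_zero).isLittleO_clm_comp hMQ hQL hPL
  obtain ⟨δ, hδ, hball⟩ := Metric.eventually_nhds_iff.1 (hsmall.def hε)
  subst hM₀
  exact ⟨δ, hδ, fun u hu => hball (by simpa using hu)⟩

/-- Almost-orthogonality: for a `C¹` map `M` between Banach spaces with `M 0 = 0`,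
derivative `L` at `0` with kernel `V₀` and image `W₁`, restricting to an isomorphism
`V₁ → W₁`, if near `0` the zero set of `M` coincides with that of the component `M₁`
and `M₁` vanishes on `V₀` near `0`, then `‖M₀ u‖ ≤ ε ‖M u‖` for `u` small. -/
theorem stmt1 {V W : Type*} [NormedAddCommGroup V] [NormedSpace ℝ V] [CompleteSpace V]
    [NormedAddCommGroup W] [NormedSpace ℝ W] [CompleteSpace W]
    (V₀ V₁ : Submodule ℝ V) (W₀ W₁ : Submodule ℝ W)
    (hVcompl : IsCompl V₀ V₁) (hWcompl : IsCompl W₀ W₁)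
    (hV₀c : IsClosed (V₀ : Set V)) (hV₁c : IsClosed (V₁ : Set V))
    (hW₀c : IsClosed (W₀ : Set W)) (hW₁c : IsClosed (W₁ : Set W))
    (M : V → W) (hM : ContDiffAt ℝ 1 M 0) (hM0 : M 0 = 0)
    (L : V →L[ℝ] W) (hL : HasFDerivAt M L 0)
    (hker : LinearMap.ker (L : V →ₗ[ℝ] W) = V₀)
    (hrange : LinearMap.range (L : V →ₗ[ℝ] W) = W₁)
    (hinj : ∀ y ∈ V₁, L y = 0 → y = 0)
    (hsurj : ∀ w ∈ W₁, ∃ y ∈ V₁, L y = w)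
    (M₀ M₁ : V → W)
    (hM₀ : M₀ = fun u => (Submodule.linearProjOfIsCompl W₀ W₁ hWcompl (M u) : W))
    (hM₁ : M₁ = fun u => M u - M₀ u)
    (ρ : ℝ) (hρ : 0 < ρ)
    (hzero : ∀ u : V, ‖u‖ < ρ → (M u = 0 ↔ M₁ u = 0))
    (hM₁van : ∀ x ∈ V₀, ‖x‖ < ρ → M₁ x = 0) :
    ∀ ε > (0:ℝ), ∃ δ > (0:ℝ), ∀ u : V, ‖u‖ < δ → ‖M₀ u‖ ≤ ε * ‖M u‖ :=
  stmt1_general V₀ V₁ W₀ W₁ hVcompl hWcompl hV₀c hV₁c hW₀c hW₁c M hM L hL hrange hinj hsurj M₀ M₁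
    hM₀ ρ hρ hzero hM₁van
end

section
/- For a, b > 0 and χ(u) = ∫₀¹ x^{a-1}(1-x)^{b-1} e^{-ux} dx, there exist constants c_{a,b}, C_{a,b} > 0 such that c_{a,b} χ(u) ≤ -(1+u) χ'(u) ≤ C_{a,b} χ(u) and c_{a,b} χ(u) ≤ (1+u²) χ''(u) ≤ C_{a,b} χ(u) for all u ≥ 0. -/
/-!
Write `χ_{p,b}` for `kummerIntegral p b`. Differentiating under the integral sign gives
`χ_{a,b}' = -χ_{a+1,b}` and `χ_{a,b}'' = χ_{a+2,b}`, so both claims say that `(1 + u) χ_{a+1,b}`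
and `(1 + u²) χ_{a+2,b}` are comparable with `χ_{a,b}` on `[0, ∞)`. This follows from
`χ_{p,b}(u) ≍ (1 + u)^{-p}` for every `p > 0`. On `[0, 1/2]` the factor `(1 - x)^{b-1}` is
bounded above and below. The lower bound comes from `[0, 1/(2(1+u))]`, where
`e^{-ux} ≥ e^{-1/2}`. The upper bound comes from `e^{-ux} ≤ e · e^{-(1+u)x}` and the Gamma
integral `∫₀^∞ x^{p-1} e^{-(1+u)x} dx = Γ(p) (1+u)^{-p}`. On `[1/2, 1]` the integrand is at
most `e^{-u/2}` times an integrable function, and `e^{-u/2}` decays faster than any power.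
-/

open scoped Interval
open MeasureTheory Set Real Filter Asymptotics intervalIntegral

theorem abs_log_le_log_two {y : ℝ} (h₁ : 1 / 2 ≤ y) (h₂ : y ≤ 1) : |log y| ≤ log 2 := by
  have hy : 0 < y := by linarith
  rw [abs_le, ← log_inv]
  exact ⟨log_le_log (by norm_num) (by linarith),
    (log_nonpos hy.le h₂).trans (log_nonneg one_le_two)⟩

theorem rpow_le_two_rpow_abs {y : ℝ} (c : ℝ) (h₁ : 1 / 2 ≤ y) (h₂ : y ≤ 1) :
    y ^ c ≤ 2 ^ |c| := by
  rw [rpow_def_of_pos (by linarith), rpow_def_of_pos two_pos, exp_le_exp]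
  calc log y * c ≤ |log y| * |c| := by rw [← abs_mul]; exact le_abs_self _
    _ ≤ log 2 * |c| := by gcongr; exact abs_log_le_log_two h₁ h₂

theorem two_rpow_neg_abs_le_rpow {y : ℝ} (c : ℝ) (h₁ : 1 / 2 ≤ y) (h₂ : y ≤ 1) :
    2 ^ (-|c|) ≤ y ^ c := by
  rw [rpow_def_of_pos two_pos, rpow_def_of_pos (by linarith), exp_le_exp]
  calc log 2 * -|c| ≤ -(|log y| * |c|) := by
        rw [mul_neg, neg_le_neg_iff]; gcongr; exact abs_log_le_log_two h₁ h₂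
    _ ≤ log y * c := by rw [← abs_mul]; exact neg_abs_le _

theorem rpow_mul_exp_neg_le {p y : ℝ} (hp : 0 < p) (hy : 0 ≤ y) :
    y ^ p * exp (-y) ≤ (p / exp 1) ^ p := by
  have key : y ^ p * exp (-y) = (p * (y / p * exp (-(y / p)))) ^ p := by
    rw [mul_rpow hp.le (by positivity), mul_rpow (by positivity) (exp_pos _).le, ← exp_mul,
      div_rpow hy hp.le]
    field_simp
  rw [key, div_eq_mul_inv p, ← exp_neg]
  have := mul_exp_neg_le_exp_neg_one (y / p)
  gcongr

theorem exp_neg_le_mul_rpow_neg {p y : ℝ} (hp : 0 < p) (hy : 0 < y) :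
    exp (-y) ≤ (p / exp 1) ^ p * y ^ (-p) := by
  rw [rpow_neg hy.le, ← div_eq_mul_inv, le_div_iff₀ (by positivity), mul_comm]
  exact rpow_mul_exp_neg_le hp hy.le

theorem exp_neg_half_isBigO {p : ℝ} (hp : 0 < p) :
    (fun u => exp (-(u / 2))) =O[𝓟 (Ici 0)] fun u => (1 + u) ^ (-p) := by
  refine isBigO_principal.2 ⟨exp (1 / 2) * (p / exp 1) ^ p * 2 ^ p, fun u (hu : 0 ≤ u) => ?_⟩
  have hu1 : 0 < 1 + u := by linarith
  have h := exp_neg_le_mul_rpow_neg hp (half_pos hu1)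
  rw [div_rpow hu1.le zero_le_two, rpow_neg zero_le_two, div_inv_eq_mul] at h
  rw [norm_of_nonneg (exp_pos _).le, norm_of_nonneg (by positivity),
    show -(u / 2) = 1 / 2 + -((1 + u) / 2) by ring, exp_add]
  calc exp (1 / 2) * exp (-((1 + u) / 2))
      ≤ exp (1 / 2) * ((p / exp 1) ^ p * ((1 + u) ^ (-p) * 2 ^ p)) := by gcongr
    _ = exp (1 / 2) * (p / exp 1) ^ p * 2 ^ p * (1 + u) ^ (-p) := by ring

theorem one_add_sq_isTheta : (fun u : ℝ => 1 + u ^ 2) =Θ[𝓟 (Ici 0)] fun u => (1 + u) ^ 2 := by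
  refine ⟨isBigO_principal.2 ⟨1, fun u (hu : 0 ≤ u) => ?_⟩,
    isBigO_principal.2 ⟨2, fun u _ => ?_⟩⟩ <;>
  · rw [norm_of_nonneg (by positivity), norm_of_nonneg (by positivity)]
    nlinarith [sq_nonneg (u - 1)]

theorem Asymptotics.IsTheta.exists_pos_mul_le_and_le_mul {α : Type*} {f g : α → ℝ} {s : Set α}
    (h : f =Θ[𝓟 s] g) (hf : ∀ x ∈ s, 0 ≤ f x) (hg : ∀ x ∈ s, 0 ≤ g x) :
    ∃ c > 0, ∃ C > 0, ∀ x ∈ s, c * g x ≤ f x ∧ f x ≤ C * g x := by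
  obtain ⟨C, hC, hfg⟩ := h.1.exists_pos
  obtain ⟨K, hK, hgf⟩ := h.2.exists_pos
  refine ⟨K⁻¹, inv_pos.2 hK, C, hC, fun x hx => ?_⟩
  have h₁ := isBigOWith_principal.1 hfg x hx
  have h₂ := isBigOWith_principal.1 hgf x hx
  rw [norm_of_nonneg (hf x hx), norm_of_nonneg (hg x hx)] at h₁ h₂
  exact ⟨by rwa [← div_eq_inv_mul, div_le_iff₀' hK], h₁⟩

theorem integral_rpow_mul_exp_neg_mul_le {p r c : ℝ} (hp : 0 < p) (hr : 0 < r) (hc : 0 ≤ c) :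
    ∫ x in (0:ℝ)..c, x ^ (p - 1) * exp (-(r * x)) ≤ (1 / r) ^ p * Gamma p := by
  have hΓ := integral_rpow_mul_exp_neg_mul_Ioi hp hr
  rw [integral_of_le hc, ← hΓ]
  refine setIntegral_mono_set (Integrable.of_integral_ne_zero ?_) ?_
    Ioc_subset_Ioi_self.eventuallyLE
  · -- integrability on `Ioi 0` is read off from the nonzero value `Γ(p) / r ^ p` of the integral
    rw [hΓ]; exact (mul_pos (by positivity) (Gamma_pos_of_pos hp)).ne'
  · exact ae_restrict_of_forall_mem measurableSet_Ioi fun x (hx : 0 < x) => by positivity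

theorem uIcc_subset_uIcc_zero_one {c d : ℝ} (hc : 0 ≤ c) (hcd : c ≤ d) (hd : d ≤ 1) :
    [[c, d]] ⊆ [[(0:ℝ), 1]] := by
  rw [uIcc_of_le hcd, uIcc_of_le zero_le_one]
  exact Icc_subset_Icc hc hd

theorem rpow_mul_one_sub_rpow_nonneg (p b : ℝ) {x : ℝ} (hx : x ∈ Icc (0:ℝ) 1) :
    0 ≤ x ^ (p - 1) * (1 - x) ^ (b - 1) :=
  mul_nonneg (rpow_nonneg hx.1 _) (rpow_nonneg (sub_nonneg.2 hx.2) _)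

theorem rpow_mul_one_sub_rpow_mul_exp_nonneg (p b u : ℝ) {x : ℝ} (hx : x ∈ Icc (0:ℝ) 1) :
    0 ≤ x ^ (p - 1) * (1 - x) ^ (b - 1) * exp (-u * x) :=
  mul_nonneg (rpow_mul_one_sub_rpow_nonneg p b hx) (exp_pos _).le

theorem intervalIntegrable_rpow_mul_one_sub_rpow {p b : ℝ} (hp : 0 < p) (hb : 0 < b) :
    IntervalIntegrable (fun x : ℝ => x ^ (p - 1) * (1 - x) ^ (b - 1)) volume 0 1 := by
  have hβ := (Complex.betaIntegral_convergent (u := p) (v := b) (by simpa) (by simpa)).norm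
  refine hβ.congr fun x hx => ?_
  rw [uIoc_of_le zero_le_one] at hx
  have h1x : (1 - (x : ℂ)) = ((1 - x : ℝ) : ℂ) := by push_cast; ring
  rw [h1x, ← Complex.ofReal_one, ← Complex.ofReal_sub, ← Complex.ofReal_sub,
    ← Complex.ofReal_cpow hx.1.le, ← Complex.ofReal_cpow (by linarith [hx.2]),
    ← Complex.ofReal_mul, Complex.norm_real, norm_of_nonneg]
  exact mul_nonneg (rpow_nonneg hx.1.le _) (rpow_nonneg (by linarith [hx.2]) _)

theorem hasDerivAt_integral_mul_exp_neg_mul {w : ℝ → ℝ} (hw : IntervalIntegrable w volume 0 1)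
    (u₀ : ℝ) :
    HasDerivAt (fun u => ∫ x in (0:ℝ)..1, w x * exp (-u * x))
      (∫ x in (0:ℝ)..1, -(x * w x * exp (-u₀ * x))) u₀ := by
  have hmeas : AEStronglyMeasurable w (volume.restrict (Ι 0 1)) := hw.def'.aestronglyMeasurable
  refine (hasDerivAt_integral_of_dominated_loc_of_deriv_le (Metric.ball_mem_nhds u₀ one_pos)
    (F := fun u x => w x * exp (-u * x)) (F' := fun u x => -(x * w x * exp (-u * x)))
    (bound := fun x => exp (|u₀| + 1) * ‖w x‖) ?_
    (hw.mul_continuousOn (by fun_prop : Continuous fun x => exp (-u₀ * x)).continuousOn) ?_ ?_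
    (hw.norm.const_mul _) ?_).2
  · exact .of_forall fun u => hmeas.mul (by fun_prop)
  · exact ((by fun_prop : Continuous fun x : ℝ => x).aestronglyMeasurable.mul hmeas).mul
      (by fun_prop) |>.neg
  · refine .of_forall fun x hx u hu => ?_
    rw [uIoc_of_le zero_le_one] at hx
    rw [Metric.mem_ball, dist_eq_norm, norm_eq_abs] at hu
    have hux : -u * x ≤ |u₀| + 1 := by
      calc -u * x ≤ |u| * 1 := by gcongr; exacts [hx.1.le, neg_le_abs u, hx.2]
        _ ≤ |u₀| + 1 := by linarith [abs_sub_abs_le_abs_sub u u₀]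
    rw [norm_neg, norm_mul, norm_mul, norm_of_nonneg hx.1.le, norm_of_nonneg (exp_pos _).le]
    calc x * ‖w x‖ * exp (-u * x) ≤ 1 * ‖w x‖ * exp (|u₀| + 1) := by
          gcongr; exact hx.2
      _ = exp (|u₀| + 1) * ‖w x‖ := by ring
  · refine .of_forall fun x _ u _ => ?_
    exact (((hasDerivAt_neg u).mul_const x).exp.const_mul (w x)).congr_deriv (by ring)

noncomputable def kummerIntegral (a b u : ℝ) : ℝ :=
  ∫ x in (0:ℝ)..1, x ^ (a - 1) * (1 - x) ^ (b - 1) * exp (-u * x)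

theorem kummerIntegral_nonneg (p b u : ℝ) : 0 ≤ kummerIntegral p b u :=
  integral_nonneg zero_le_one fun _ hx => rpow_mul_one_sub_rpow_mul_exp_nonneg p b u hx

section Kummer

variable {p b : ℝ}

theorem intervalIntegrable_rpow_mul_one_sub_rpow_mul_exp (hp : 0 < p) (hb : 0 < b) (u : ℝ) :
    IntervalIntegrable (fun x => x ^ (p - 1) * (1 - x) ^ (b - 1) * exp (-u * x)) volume 0 1 :=
  (intervalIntegrable_rpow_mul_one_sub_rpow hp hb).mul_continuousOn (by fun_prop)

theorem hasDerivAt_kummerIntegral (hp : 0 < p) (hb : 0 < b) (u : ℝ) :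
    HasDerivAt (kummerIntegral p b) (-kummerIntegral (p + 1) b u) u := by
  refine (hasDerivAt_integral_mul_exp_neg_mul
    (intervalIntegrable_rpow_mul_one_sub_rpow hp hb) u).congr_deriv ?_
  rw [kummerIntegral, ← intervalIntegral.integral_neg]
  refine integral_congr fun x hx => ?_
  rw [uIcc_of_le zero_le_one] at hx
  have hxp : x ^ (p + 1 - 1) = x ^ (p - 1) * x := by
    rw [← rpow_add_one' hx.1 (by rw [sub_add_cancel]; exact hp.ne'), sub_add_cancel,
      add_sub_cancel_right]
  rw [hxp]
  ring

theorem deriv_kummerIntegral (hp : 0 < p) (hb : 0 < b) :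
    deriv (kummerIntegral p b) = fun u => -kummerIntegral (p + 1) b u :=
  funext fun u => (hasDerivAt_kummerIntegral hp hb u).deriv

theorem deriv_deriv_kummerIntegral (hp : 0 < p) (hb : 0 < b) :
    deriv (deriv (kummerIntegral p b)) = kummerIntegral (p + 2) b := by
  refine funext fun u => ?_
  rw [deriv_kummerIntegral hp hb]
  refine (hasDerivAt_kummerIntegral (by linarith) hb u).neg.deriv.trans ?_
  rw [neg_neg, add_assoc, one_add_one_eq_two]

theorem integral_zero_half_rpow_mul_one_sub_rpow_mul_exp_isBigO (hp : 0 < p) (hb : 0 < b) :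
    (fun u => ∫ x in (0:ℝ)..1 / 2, x ^ (p - 1) * (1 - x) ^ (b - 1) * exp (-u * x))
      =O[𝓟 (Ici 0)] fun u => (1 + u) ^ (-p) := by
  refine isBigO_principal.2 ⟨2 ^ |b - 1| * exp 1 * Gamma p, fun u (hu : 0 ≤ u) => ?_⟩
  have hu1 : 0 < 1 + u := by linarith
  rw [norm_of_nonneg (integral_nonneg (by norm_num) fun x hx =>
      rpow_mul_one_sub_rpow_mul_exp_nonneg p b u ⟨hx.1, by linarith [hx.2]⟩),
    norm_of_nonneg (by positivity)]
  calc ∫ x in (0:ℝ)..1 / 2, x ^ (p - 1) * (1 - x) ^ (b - 1) * exp (-u * x)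
      ≤ ∫ x in (0:ℝ)..1 / 2, 2 ^ |b - 1| * exp 1 * (x ^ (p - 1) * exp (-((1 + u) * x))) := by
        refine integral_mono_on (by norm_num) ?_ ?_ fun x hx => ?_
        · exact (intervalIntegrable_rpow_mul_one_sub_rpow_mul_exp hp hb u).mono_set
            (uIcc_subset_uIcc_zero_one le_rfl (by norm_num) (by norm_num))
        · exact ((intervalIntegrable_rpow' (by linarith)).mul_continuousOn
            (by fun_prop)).const_mul _
        · have hM : (1 - x) ^ (b - 1) ≤ 2 ^ |b - 1| :=
            rpow_le_two_rpow_abs _ (by linarith [hx.2]) (by linarith [hx.1])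
          have hexp : exp (-u * x) ≤ exp 1 * exp (-((1 + u) * x)) := by
            rw [← exp_add, exp_le_exp]; linarith [hx.2]
          have := hx.1
          calc x ^ (p - 1) * (1 - x) ^ (b - 1) * exp (-u * x)
              ≤ x ^ (p - 1) * 2 ^ |b - 1| * (exp 1 * exp (-((1 + u) * x))) := by gcongr
            _ = 2 ^ |b - 1| * exp 1 * (x ^ (p - 1) * exp (-((1 + u) * x))) := by ring
    _ = 2 ^ |b - 1| * exp 1 * ∫ x in (0:ℝ)..1 / 2, x ^ (p - 1) * exp (-((1 + u) * x)) :=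
        intervalIntegral.integral_const_mul _ _
    _ ≤ 2 ^ |b - 1| * exp 1 * ((1 / (1 + u)) ^ p * Gamma p) := by
        gcongr; exact integral_rpow_mul_exp_neg_mul_le hp hu1 (by norm_num)
    _ = 2 ^ |b - 1| * exp 1 * Gamma p * (1 + u) ^ (-p) := by
        rw [one_div, inv_rpow hu1.le, rpow_neg hu1.le]; ring

theorem integral_half_one_rpow_mul_one_sub_rpow_mul_exp_isBigO (hp : 0 < p) (hb : 0 < b) :
    (fun u => ∫ x in (1 / 2 : ℝ)..1, x ^ (p - 1) * (1 - x) ^ (b - 1) * exp (-u * x))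
      =O[𝓟 (Ici 0)] fun u => (1 + u) ^ (-p) := by
  have hsub := uIcc_subset_uIcc_zero_one (by norm_num : (0:ℝ) ≤ 1 / 2) (by norm_num) le_rfl
  have hw := (intervalIntegrable_rpow_mul_one_sub_rpow hp hb).mono_set hsub
  refine IsBigO.trans ?_ (exp_neg_half_isBigO hp)
  refine isBigO_principal.2
    ⟨∫ x in (1 / 2 : ℝ)..1, x ^ (p - 1) * (1 - x) ^ (b - 1), fun u (hu : 0 ≤ u) => ?_⟩
  rw [norm_of_nonneg (integral_nonneg (by norm_num) fun x hx =>
      rpow_mul_one_sub_rpow_mul_exp_nonneg p b u ⟨by linarith [hx.1], hx.2⟩),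
    norm_of_nonneg (exp_pos _).le, ← intervalIntegral.integral_mul_const]
  refine integral_mono_on (by norm_num)
    ((intervalIntegrable_rpow_mul_one_sub_rpow_mul_exp hp hb u).mono_set hsub)
    (hw.mul_const _) fun x hx => ?_
  have := rpow_mul_one_sub_rpow_nonneg p b ⟨by linarith [hx.1], hx.2⟩
  gcongr
  linarith [mul_le_mul_of_nonneg_left hx.1 hu]

theorem kummerIntegral_isBigO (hp : 0 < p) (hb : 0 < b) :
    kummerIntegral p b =O[𝓟 (Ici 0)] fun u => (1 + u) ^ (-p) := by
  refine ((integral_zero_half_rpow_mul_one_sub_rpow_mul_exp_isBigO hp hb).add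
    (integral_half_one_rpow_mul_one_sub_rpow_mul_exp_isBigO hp hb)).congr_left fun u => ?_
  have hint := intervalIntegrable_rpow_mul_one_sub_rpow_mul_exp hp hb u
  exact integral_add_adjacent_intervals
    (hint.mono_set (uIcc_subset_uIcc_zero_one le_rfl (by norm_num) (by norm_num)))
    (hint.mono_set (uIcc_subset_uIcc_zero_one (by norm_num) (by norm_num) le_rfl))

theorem isBigO_kummerIntegral (hp : 0 < p) (hb : 0 < b) :
    (fun u => (1 + u) ^ (-p)) =O[𝓟 (Ici 0)] kummerIntegral p b := by
  set m : ℝ := 2 ^ (-|b - 1|) * exp (-(1 / 2))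
  refine isBigO_principal.2 ⟨(m * 2 ^ (-p) / p)⁻¹, fun u (hu : 0 ≤ u) => ?_⟩
  rw [norm_of_nonneg (by positivity), norm_of_nonneg (kummerIntegral_nonneg p b u),
    ← div_eq_inv_mul, le_div_iff₀' (by positivity)]
  have hu1 : 0 < 1 + u := by linarith
  set s : ℝ := (2 * (1 + u))⁻¹
  have hs0 : 0 < s := by positivity
  have hs : s ≤ 1 / 2 := by
    rw [one_div]; exact inv_anti₀ two_pos (by linarith)
  have hus : u * s ≤ 1 / 2 := by
    have : (1 + u) * s = 1 / 2 := by simp only [s]; field_simp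
    linarith
  have hint := intervalIntegrable_rpow_mul_one_sub_rpow_mul_exp hp hb u
  calc m * 2 ^ (-p) / p * (1 + u) ^ (-p) = m * (s ^ p / p) := by
        rw [inv_rpow (by positivity), mul_rpow zero_le_two hu1.le, rpow_neg zero_le_two,
          rpow_neg hu1.le]
        ring
    _ = ∫ x in (0:ℝ)..s, m * x ^ (p - 1) := by
        rw [intervalIntegral.integral_const_mul, integral_rpow (Or.inl (by linarith)),
          sub_add_cancel, zero_rpow hp.ne', sub_zero]
    _ ≤ ∫ x in (0:ℝ)..s, x ^ (p - 1) * (1 - x) ^ (b - 1) * exp (-u * x) := by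
        refine integral_mono_on hs0.le ((intervalIntegrable_rpow' (by linarith)).const_mul _)
          (hint.mono_set (uIcc_subset_uIcc_zero_one le_rfl hs0.le (by linarith))) fun x hx => ?_
        have hb' : 2 ^ (-|b - 1|) ≤ (1 - x) ^ (b - 1) :=
          two_rpow_neg_abs_le_rpow _ (by linarith [hx.2]) (by linarith [hx.1])
        have hexp : exp (-(1 / 2)) ≤ exp (-u * x) := by
          rw [exp_le_exp]; linarith [mul_le_mul_of_nonneg_left hx.2 hu]
        have := hx.1
        have : 0 ≤ 1 - x := by linarith [hx.2]
        calc m * x ^ (p - 1) = x ^ (p - 1) * 2 ^ (-|b - 1|) * exp (-(1 / 2)) := by ring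
          _ ≤ x ^ (p - 1) * (1 - x) ^ (b - 1) * exp (-u * x) := by gcongr
    _ ≤ kummerIntegral p b u :=
        integral_mono_interval le_rfl hs0.le (by linarith)
          (ae_restrict_of_forall_mem measurableSet_Ioc fun x hx =>
            rpow_mul_one_sub_rpow_mul_exp_nonneg p b u (Ioc_subset_Icc_self hx)) hint

theorem kummerIntegral_isTheta (hp : 0 < p) (hb : 0 < b) :
    kummerIntegral p b =Θ[𝓟 (Ici 0)] fun u => (1 + u) ^ (-p) :=
  ⟨kummerIntegral_isBigO hp hb, isBigO_kummerIntegral hp hb⟩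

theorem rpow_mul_kummerIntegral_isTheta {q : ℝ} (hp : 0 < p) (hq : 0 ≤ q) (hb : 0 < b) :
    (fun u => (1 + u) ^ q * kummerIntegral (p + q) b u) =Θ[𝓟 (Ici 0)] kummerIntegral p b := by
  refine ((isTheta_refl _ _).mul (kummerIntegral_isTheta (by linarith) hb)).trans_eventuallyEq
    ?_ |>.trans (kummerIntegral_isTheta hp hb).symm
  refine eventually_principal.2 fun u (hu : 0 ≤ u) => ?_
  dsimp only
  rw [← rpow_add (by linarith)]
  congr 1
  ring

theorem one_add_mul_kummerIntegral_isTheta (hp : 0 < p) (hb : 0 < b) :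
    (fun u => (1 + u) * kummerIntegral (p + 1) b u) =Θ[𝓟 (Ici 0)] kummerIntegral p b := by
  simpa only [rpow_one] using rpow_mul_kummerIntegral_isTheta hp zero_le_one hb

theorem one_add_sq_mul_kummerIntegral_isTheta (hp : 0 < p) (hb : 0 < b) :
    (fun u => (1 + u ^ 2) * kummerIntegral (p + 2) b u) =Θ[𝓟 (Ici 0)] kummerIntegral p b := by
  refine (one_add_sq_isTheta.mul (isTheta_refl _ _)).trans ?_
  simpa only [rpow_two] using rpow_mul_kummerIntegral_isTheta hp zero_le_two hb

end Kummer

/-- Derivative comparison bounds for Kummer's confluent hypergeometric function: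
`c χ(u) ≤ -(1+u) χ'(u) ≤ C χ(u)` and `c χ(u) ≤ (1+u²) χ''(u) ≤ C χ(u)`. -/
theorem stmt4 (a b : ℝ) (ha : 0 < a) (hb : 0 < b)
    (χ : ℝ → ℝ)
    (hχ : χ = fun u => ∫ x in (0:ℝ)..1, x ^ (a - 1) * (1 - x) ^ (b - 1) * Real.exp (-u * x)) :
    ∃ c > (0:ℝ), ∃ C > (0:ℝ), ∀ u ≥ (0:ℝ),
      (c * χ u ≤ -((1 + u) * deriv χ u) ∧ -((1 + u) * deriv χ u) ≤ C * χ u) ∧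
      (c * χ u ≤ (1 + u ^ 2) * deriv (deriv χ) u ∧
        (1 + u ^ 2) * deriv (deriv χ) u ≤ C * χ u) := by
  obtain rfl : χ = kummerIntegral a b := hχ
  obtain ⟨c₁, hc₁, C₁, hC₁, h₁⟩ :=
    (one_add_mul_kummerIntegral_isTheta ha hb).exists_pos_mul_le_and_le_mul
      (fun u (hu : 0 ≤ u) => mul_nonneg (by linarith) (kummerIntegral_nonneg _ b u))
      (fun u _ => kummerIntegral_nonneg a b u)
  obtain ⟨c₂, hc₂, C₂, hC₂, h₂⟩ :=
    (one_add_sq_mul_kummerIntegral_isTheta ha hb).exists_pos_mul_le_and_le_mul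
      (fun u _ => mul_nonneg (by positivity) (kummerIntegral_nonneg _ b u))
      (fun u _ => kummerIntegral_nonneg a b u)
  refine ⟨min c₁ c₂, by positivity, max C₁ C₂, by positivity, fun u hu => ?_⟩
  rw [deriv_deriv_kummerIntegral ha hb, deriv_kummerIntegral ha hb, mul_neg, neg_neg]
  have hχu := kummerIntegral_nonneg a b u
  obtain ⟨hl₁, hr₁⟩ := h₁ u hu
  obtain ⟨hl₂, hr₂⟩ := h₂ u hu
  exact ⟨⟨(mul_le_mul_of_nonneg_right (min_le_left _ _) hχu).trans hl₁,
      hr₁.trans (mul_le_mul_of_nonneg_right (le_max_left _ _) hχu)⟩,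
    ⟨(mul_le_mul_of_nonneg_right (min_le_right _ _) hχu).trans hl₂,
      hr₂.trans (mul_le_mul_of_nonneg_right (le_max_right _ _) hχu)⟩⟩
end

section
/- Let μ > 2 and 0 < ℓ < μ - 2. Then for all (r,t) with t + 1 ≥ D r² for a sufficiently large constant D = D(ℓ, μ), the function w(r,t) = (r² + 1)^{-ℓ/2}(r² + t + 1)^{-(k-ℓ)/2} (for any k ≥ ℓ) satisfies (∂_t - Δ_μ - d/(r²+1)) w ≥ 0 for some constant d = d(k, ℓ, μ) > 0, where Δ_μ = ∂_r² + ((μ-1)/r)∂_r. -/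
/-!
Writing `w = U(r) V(r,t)` with `U = (r²+1)^(-ℓ/2)` and `V = (r²+t+1)^(-m/2)`, `m = k - ℓ`, the
logarithmic derivatives of both factors are rational, so `(∂_t - Δ_μ) w = R · w` with an explicit
rational `R`. Its `U`-part is at least `ℓ(μ-ℓ-2)/(r²+1)`, positive since `ℓ < μ - 2`, while the
negative contributions of `V` are `O(r²/(r²+t+1)) · 1/(r²+1)`, hence at most `C/(D(r²+1))` with
`C = C(k, ℓ)` when `t + 1 ≥ D r²`. Taking `D` large, `R ≥ ℓ(μ-ℓ-2)/2 · 1/(r²+1)`.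
-/

section SqAdd

variable {c : ℝ}

theorem hasDerivAt_sq_add_rpow (hc : 0 < c) (p x : ℝ) :
    HasDerivAt (fun y => (y ^ 2 + c) ^ p) ((x ^ 2 + c) ^ p * (2 * p * x / (x ^ 2 + c))) x := by
  have hx : x ^ 2 + c ≠ 0 := by positivity
  convert ((hasDerivAt_pow 2 x).add_const c).rpow_const (p := p) (Or.inl hx) using 1
  rw [Real.rpow_sub_one hx]
  simp only [Nat.cast_ofNat]
  ring

theorem hasDerivAt_sq_add_div (hc : 0 < c) (a x : ℝ) :
    HasDerivAt (fun y => a * y / (y ^ 2 + c)) (a * (c - x ^ 2) / (x ^ 2 + c) ^ 2) x := by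
  have hx : x ^ 2 + c ≠ 0 := by positivity
  refine (((hasDerivAt_id x).const_mul a).div ((hasDerivAt_pow 2 x).add_const c) hx).congr_deriv ?_
  simp only [id, Nat.cast_ofNat]
  ring

theorem deriv_deriv_eq_of_hasDerivAt_mul {f L : ℝ → ℝ} {L' x : ℝ}
    (hf : ∀ y, HasDerivAt f (f y * L y) y) (hL : HasDerivAt L L' x) :
    deriv (deriv f) x = f x * (L x ^ 2 + L') := by
  rw [show deriv f = fun y => f y * L y from funext fun y => (hf y).deriv]
  exact ((hf x).mul hL).deriv.trans (by ring)

end SqAdd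

noncomputable def heatProfile (ℓ m r t : ℝ) : ℝ :=
  (r ^ 2 + 1) ^ (-(ℓ / 2)) * (r ^ 2 + t + 1) ^ (-(m / 2))

noncomputable def radialLaplacian (μ : ℝ) (f : ℝ → ℝ) (r : ℝ) : ℝ :=
  deriv (deriv f) r + (μ - 1) / r * deriv f r

/-- The ratio `(∂_t - Δ_μ) w / w` for `w = heatProfile ℓ m`. -/
noncomputable def heatOperatorRatio (μ ℓ m r t : ℝ) : ℝ :=
  (ℓ * μ * (r ^ 2 + 1) - ℓ * (ℓ + 2) * r ^ 2) / (r ^ 2 + 1) ^ 2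
    + m * ((μ - 1 / 2) * (r ^ 2 + t + 1) - (m + 2) * r ^ 2) / (r ^ 2 + t + 1) ^ 2
    - 2 * ℓ * m * r ^ 2 / ((r ^ 2 + 1) * (r ^ 2 + t + 1))

namespace heatProfile

variable {ℓ m r t : ℝ}

theorem pos (ht : 0 < r ^ 2 + t + 1) : 0 < heatProfile ℓ m r t := by
  unfold heatProfile
  positivity

theorem hasDerivAt_time (ht : 0 < r ^ 2 + t + 1) :
    HasDerivAt (heatProfile ℓ m r) (heatProfile ℓ m r t * (-(m / 2) / (r ^ 2 + t + 1))) t := by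
  refine (((((hasDerivAt_id t).const_add (r ^ 2)).add_const 1).rpow_const
    (p := -(m / 2)) (Or.inl ht.ne')).const_mul ((r ^ 2 + 1) ^ (-(ℓ / 2)))).congr_deriv ?_
  unfold heatProfile
  simp only [id]
  rw [Real.rpow_sub_one ht.ne']
  ring

noncomputable def radialLogDeriv (ℓ m t r : ℝ) : ℝ :=
  -ℓ * r / (r ^ 2 + 1) + -m * r / (r ^ 2 + (t + 1))

theorem hasDerivAt_radial (ht : 0 < t + 1) (x : ℝ) :
    HasDerivAt (fun y => heatProfile ℓ m y t)
      (heatProfile ℓ m x t * radialLogDeriv ℓ m t x) x := by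
  have := (hasDerivAt_sq_add_rpow one_pos (-(ℓ / 2)) x).mul
    (hasDerivAt_sq_add_rpow ht (-(m / 2)) x)
  simp only [← add_assoc] at this
  refine this.congr_deriv ?_
  unfold heatProfile radialLogDeriv
  simp only [← add_assoc]
  ring

theorem deriv_deriv_radial (ht : 0 < t + 1) :
    deriv (deriv fun y => heatProfile ℓ m y t) r = heatProfile ℓ m r t *
      (radialLogDeriv ℓ m t r ^ 2 +
        (-ℓ * (1 - r ^ 2) / (r ^ 2 + 1) ^ 2 + -m * (t + 1 - r ^ 2) / (r ^ 2 + (t + 1)) ^ 2)) :=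
  deriv_deriv_eq_of_hasDerivAt_mul (hasDerivAt_radial ht)
    ((hasDerivAt_sq_add_div one_pos (-ℓ) r).add (hasDerivAt_sq_add_div ht (-m) r))

theorem deriv_sub_radialLaplacian {μ : ℝ} (hr : r ≠ 0) (ht : 0 < t + 1) :
    deriv (heatProfile ℓ m r) t - radialLaplacian μ (fun y => heatProfile ℓ m y t) r =
      heatProfile ℓ m r t * heatOperatorRatio μ ℓ m r t := by
  have hv : 0 < r ^ 2 + t + 1 := by linarith [sq_nonneg r]
  rw [radialLaplacian, (hasDerivAt_time hv).deriv, deriv_deriv_radial ht,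
    (hasDerivAt_radial ht r).deriv]
  unfold heatOperatorRatio radialLogDeriv
  simp only [← add_assoc]
  field_simp
  ring

end heatProfile

theorem le_heatOperatorRatio {μ ℓ m D r t : ℝ} (hℓ : 0 ≤ ℓ) (hm : 0 ≤ m) (hμ : 1 / 2 ≤ μ)
    (hD : 0 < D) (ht : 0 ≤ t) (hDr : D * r ^ 2 ≤ t + 1) :
    (ℓ * (μ - ℓ - 2) - (m * (m + 2) + 2 * ℓ * m) / D) / (r ^ 2 + 1) ≤
      heatOperatorRatio μ ℓ m r t := by
  set u := r ^ 2 + 1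
  set v := r ^ 2 + t + 1
  have hu : 0 < u := by positivity
  have huv : u ≤ v := by linarith
  have hv : 0 < v := hu.trans_le huv
  have hrv : r ^ 2 / v ≤ 1 / D := by
    rw [div_le_div_iff₀ hv hD]
    nlinarith [sq_nonneg r]
  have hrvu : r ^ 2 / v / v ≤ 1 / D / u :=
    div_le_div₀ (by positivity) hrv hu huv
  have hℓpart : ℓ * (μ - ℓ - 2) / u ≤ (ℓ * μ * u - ℓ * (ℓ + 2) * r ^ 2) / u ^ 2 := by
    rw [div_le_div_iff₀ hu (by positivity)]
    nlinarith [mul_nonneg (mul_nonneg hℓ (by linarith : (0:ℝ) ≤ ℓ + 2)) hu.le]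
  have hmpart : -(m * (m + 2)) * (1 / D / u) ≤ m * ((μ - 1 / 2) * v - (m + 2) * r ^ 2) / v ^ 2 := by
    have hsplit : m * ((μ - 1 / 2) * v - (m + 2) * r ^ 2) / v ^ 2
        = m * (μ - 1 / 2) / v - m * (m + 2) * (r ^ 2 / v / v) := by
      field_simp
    have : 0 ≤ m * (μ - 1 / 2) / v := by
      have hμ' := sub_nonneg.2 hμ
      positivity
    rw [hsplit]
    linarith [mul_le_mul_of_nonneg_left hrvu (by positivity : 0 ≤ m * (m + 2))]
  have hcross : -(2 * ℓ * m) * (1 / D / u) ≤ -(2 * ℓ * m * r ^ 2 / (u * v)) := by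
    have hsplit : 2 * ℓ * m * r ^ 2 / (u * v) = 2 * ℓ * m * (r ^ 2 / v / u) := by
      field_simp
    rw [hsplit, neg_mul, neg_le_neg_iff]
    exact mul_le_mul_of_nonneg_left (div_le_div_of_nonneg_right hrv hu.le) (by positivity)
  unfold heatOperatorRatio
  calc _ = ℓ * (μ - ℓ - 2) / u + -(m * (m + 2)) * (1 / D / u) + -(2 * ℓ * m) * (1 / D / u) := by
        field_simp; ring
    _ ≤ _ := by linarith

theorem stmt8_general (μ ℓ k : ℝ) (hℓ0 : 0 < ℓ) (hℓ : ℓ < μ - 2) (hk : ℓ ≤ k)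
    (w : ℝ → ℝ → ℝ)
    (hw : w = fun r t => (r ^ 2 + 1) ^ (-(ℓ / 2)) * (r ^ 2 + t + 1) ^ (-((k - ℓ) / 2))) :
    ∃ D > (0:ℝ), ∃ d > (0:ℝ), ∀ r > (0:ℝ), ∀ t ≥ (0:ℝ), D * r ^ 2 ≤ t + 1 →
      0 ≤ deriv (fun s => w r s) t
        - (deriv (fun q => deriv (fun q' => w q' t) q) r
            + ((μ - 1) / r) * deriv (fun q => w q t) r)
        - d / (r ^ 2 + 1) * w r t := by
  obtain rfl : w = heatProfile ℓ (k - ℓ) := hw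
  set c := ℓ * (μ - ℓ - 2)
  set C := (k - ℓ) * (k - ℓ + 2) + 2 * ℓ * (k - ℓ)
  have hc : 0 < c := mul_pos hℓ0 (by linarith)
  have hC : 0 ≤ C := by
    have hm := sub_nonneg.2 hk
    positivity
  refine ⟨1 + 2 * C / c, by positivity, c / 2, by positivity, fun r hr t ht hDr => ?_⟩
  have hCD : C / (1 + 2 * C / c) ≤ c / 2 := by
    rw [div_le_iff₀ (by positivity)]
    field_simp
    linarith
  have hratio : c / 2 / (r ^ 2 + 1) ≤ heatOperatorRatio μ ℓ (k - ℓ) r t :=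
    (div_le_div_of_nonneg_right (by linarith) (by positivity)).trans
      (le_heatOperatorRatio hℓ0.le (sub_nonneg.2 hk) (by linarith) (by positivity) ht hDr)
  have hsuper : 0 ≤ heatProfile ℓ (k - ℓ) r t * heatOperatorRatio μ ℓ (k - ℓ) r t
      - c / 2 / (r ^ 2 + 1) * heatProfile ℓ (k - ℓ) r t := by
    have hw := heatProfile.pos (ℓ := ℓ) (m := k - ℓ) (by positivity : 0 < r ^ 2 + t + 1)
    linear_combination mul_nonneg hw.le (sub_nonneg.2 hratio)
  rw [← heatProfile.deriv_sub_radialLaplacian hr.ne' (by linarith)] at hsuper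
  exact hsuper

/-- For `μ > 2`, `0 < ℓ < μ - 2` and `k ≥ ℓ`, the function
`w(r,t) = (r²+1)^(-ℓ/2) (r²+t+1)^(-(k-ℓ)/2)` is a supersolution of
`(∂_t - Δ_μ - d/(r²+1)) w ≥ 0` in the regime `t + 1 ≥ D r²`, where
`Δ_μ = ∂_r² + ((μ-1)/r) ∂_r`. -/
theorem stmt8 (μ ℓ k : ℝ) (hμ : 2 < μ) (hℓ0 : 0 < ℓ) (hℓ : ℓ < μ - 2) (hk : ℓ ≤ k)
    (w : ℝ → ℝ → ℝ)
    (hw : w = fun r t => (r ^ 2 + 1) ^ (-(ℓ / 2)) * (r ^ 2 + t + 1) ^ (-((k - ℓ) / 2))) :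
    ∃ D > (0:ℝ), ∃ d > (0:ℝ), ∀ r > (0:ℝ), ∀ t ≥ (0:ℝ), D * r ^ 2 ≤ t + 1 →
      0 ≤ deriv (fun s => w r s) t
        - (deriv (fun q => deriv (fun q' => w q' t) q) r
            + ((μ - 1) / r) * deriv (fun q => w q t) r)
        - d / (r ^ 2 + 1) * w r t :=
  stmt8_general μ ℓ k hℓ0 hℓ hk w hw
end
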